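/- Suppose R is a variable-preserving, convergent, quasi-deterministic rewrite system. Then RHS(R) fails to be quasi-deterministic if and only if RHS(R) contains a root pair repetition. -/

import Mathlib

/-! Basic first-order terms, positions, substitutions and rewriting. -/

inductive Term (F : Type) : Type
  | var : Nat → Term F
  | app : F → List (Term F) → Term F

namespace Term

def subst {F : Type} (σ : Nat → Term F) : Term F → Term F
  | var n => σ n
  | app f ts => app f (ts.attach.map fun ⟨t, _⟩ => t.subst σ)

def root {F : Type} : Term F → Option F
  | var _ => none
  | app f _ => some f

def label {F : Type} : Term F → F ⊕ Nat
  | var n => Sum.inr n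
  | app f _ => Sum.inl f

def IsVar {F : Type} : Term F → Prop
  | var _ => True
  | app _ _ => False

def varsL {F : Type} : Term F → List Nat
  | var n => [n]
  | app _ ts => (ts.attach.map fun ⟨t, _⟩ => t.varsL).flatten

end Term

abbrev Rule (F : Type) := Term F × Term F
abbrev TRS (F : Type) := Set (Rule F)

/-- `SubtermAt t p u` : the subterm of `t` at position `p` is `u`. -/
inductive SubtermAt {F : Type} : Term F → List Nat → Term F → Prop
  | here (t : Term F) : SubtermAt t [] t
  | there {f : F} {ts : List (Term F)} {i : Nat} {u : Term F} {p : List Nat} {v : Term F} :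
      ts[i]? = some u → SubtermAt u p v → SubtermAt (Term.app f ts) (i :: p) v

/-- `ReplaceAt t p v t'` : replacing the subterm of `t` at position `p` by `v` yields `t'`. -/
inductive ReplaceAt {F : Type} : Term F → List Nat → Term F → Term F → Prop
  | here (t u : Term F) : ReplaceAt t [] u u
  | there {f : F} {ts : List (Term F)} {i : Nat} {u : Term F} {p : List Nat} {v w : Term F} :
      ts[i]? = some u → ReplaceAt u p v w →
      ReplaceAt (Term.app f ts) (i :: p) v (Term.app f (ts.set i w))

variable {F : Type}

/-- One rewrite step using the given rule (at some position, with some substitution). -/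
def RuleStep (ρ : Rule F) (s t : Term F) : Prop :=
  ∃ (σ : Nat → Term F) (p : List Nat),
    SubtermAt s p (ρ.1.subst σ) ∧ ReplaceAt s p (ρ.2.subst σ) t

def OneStep (R : TRS F) (s t : Term F) : Prop := ∃ ρ ∈ R, RuleStep ρ s t

/-- A rewrite step at the root position. -/
def RootStep (R : TRS F) (s t : Term F) : Prop :=
  ∃ ρ ∈ R, ∃ σ : Nat → Term F, s = ρ.1.subst σ ∧ t = ρ.2.subst σ

def StarRW (R : TRS F) : Term F → Term F → Prop := Relation.ReflTransGen (OneStep R)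
def Plus (R : TRS F) : Term F → Term F → Prop := Relation.TransGen (OneStep R)
/-- Convertibility (the congruence / equational theory generated by `R`). -/
def Conv (R : TRS F) : Term F → Term F → Prop := Relation.EqvGen (OneStep R)
def Joinable (R : TRS F) (s t : Term F) : Prop := ∃ u, StarRW R s u ∧ StarRW R t u
def NormalForm (R : TRS F) (t : Term F) : Prop := ∀ u, ¬ OneStep R t u
/-- `t` is the `R`-normal form of `s`. -/
def NFof (R : TRS F) (s t : Term F) : Prop := StarRW R s t ∧ NormalForm R t
def Terminating (R : TRS F) : Prop := WellFounded (fun a b : Term F => OneStep R b a)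
def Confluent (R : TRS F) : Prop := ∀ s t u, StarRW R s t → StarRW R s u → Joinable R t u
def Convergent (R : TRS F) : Prop := Confluent R ∧ Terminating R

/-- every proper subterm is irreducible -/
def EpsIrreducible (R : TRS F) (t : Term F) : Prop :=
  ∀ p u, SubtermAt t p u → p ≠ [] → NormalForm R u

def InnermostRedex (R : TRS F) (t : Term F) : Prop :=
  EpsIrreducible R t ∧ ¬ NormalForm R t

/-- Forward-closed, via the one-step-to-normal-form characterization. -/
def FCclosed (R : TRS F) : Prop :=
  ∀ t, InnermostRedex R t → ∀ u, NFof R t u → OneStep R t u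

def Unifies (σ : Nat → Term F) (s t : Term F) : Prop := s.subst σ = t.subst σ

def IsMGU (σ : Nat → Term F) (s t : Term F) : Prop :=
  Unifies σ s t ∧ ∀ τ, Unifies τ s t → ∃ δ, ∀ x, τ x = (σ x).subst δ

def IsRenaming (ρ : Nat → Term F) : Prop :=
  ∃ f : Nat → Nat, Function.Injective f ∧ ∀ n, ρ n = Term.var (f n)

/-- Redundancy criterion for an oriented equation `e` whose right-hand side is
reachable from its left-hand side: some proper subterm of the lhs is reducible. -/
def Redundant (R : TRS F) (e : Rule F) : Prop :=
  ∃ p u, p ≠ ([] : List Nat) ∧ SubtermAt e.1 p u ∧ ¬ NormalForm R u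

/-- `R₁ ↝ R₂`: forward overlaps of rules of `R₂` (renamed apart) into
right-hand sides of rules of `R₁`, at non-variable positions, via an mgu. -/
def FStep (R₁ R₂ : TRS F) : TRS F :=
  { e | ∃ (l₁ r₁ l₂ r₂ : Term F) (ρ : Nat → Term F) (p : List Nat) (u : Term F)
          (σ : Nat → Term F) (r₁' : Term F),
      (l₁, r₁) ∈ R₁ ∧ (l₂, r₂) ∈ R₂ ∧ IsRenaming ρ ∧
      SubtermAt r₁ p u ∧ ¬ u.IsVar ∧ IsMGU σ u (l₂.subst ρ) ∧
      ReplaceAt r₁ p (r₂.subst ρ) r₁' ∧ e = (l₁.subst σ, r₁'.subst σ) }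

def FCiter (R : TRS F) : Nat → TRS F
  | 0 => R
  | k + 1 => FCiter R k ∪ { e | e ∈ FStep (FCiter R k) R ∧ ¬ Redundant (FCiter R k) e }

def FCinf (R : TRS F) : TRS F := ⋃ k, FCiter R k

/-- Forward-closed, via the forward-closure construction: `FC(R) = R`. -/
def ForwardClosedFC (R : TRS F) : Prop := FCinf R = R

/-- `RHS(R)`: `R` together with the conclusions of right-hand-side critical
pair inferences (second rule renamed apart). -/
def RHSset (R : TRS F) : TRS F :=
  R ∪ { e | ∃ (s t u₀ v₀ : Term F) (ρ σ : Nat → Term F), (s, t) ∈ R ∧ (u₀, v₀) ∈ R ∧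
        IsRenaming ρ ∧ IsMGU σ t (v₀.subst ρ) ∧
        s.subst σ ≠ (u₀.subst ρ).subst σ ∧ e = (s.subst σ, (u₀.subst ρ).subst σ) }

/-- the (unordered) pairs of root symbols of two equations coincide -/
def RootPairSimilar (e₁ e₂ : Rule F) : Prop :=
  (e₁.1.root = e₂.1.root ∧ e₁.2.root = e₂.2.root) ∨
  (e₁.1.root = e₂.2.root ∧ e₁.2.root = e₂.1.root)

def QuasiDet (E : TRS F) : Prop :=
  (∀ e ∈ E, ¬ e.1.IsVar ∧ ¬ e.2.IsVar) ∧
  (∀ e ∈ E, e.1.root ≠ e.2.root) ∧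
  (∀ e₁ ∈ E, ∀ e₂ ∈ E, e₁ ≠ e₂ → ¬ RootPairSimilar e₁ e₂)

def HasRootPairRepetition (E : TRS F) : Prop :=
  ∃ e₁ ∈ E, ∃ e₂ ∈ E, e₁ ≠ e₂ ∧ RootPairSimilar e₁ e₂

def VarPreserving (R : TRS F) : Prop :=
  ∀ e ∈ R, ∀ n, n ∈ Term.varsL e.1 ↔ n ∈ Term.varsL e.2

def RightReduced (R : TRS F) : Prop := ∀ e ∈ R, NormalForm R e.2

def AlmostLeftReduced (R : TRS F) : Prop :=
  ¬ ∃ (l₁ r₁ l₂ r₂ : Term F) (p : List Nat) (u : Term F) (σ : Nat → Term F),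
      (l₁, r₁) ∈ R ∧ (l₂, r₂) ∈ R ∧ p ≠ [] ∧ SubtermAt l₁ p u ∧ u = l₂.subst σ

def NonSubtermCollapsing (R : TRS F) : Prop :=
  ¬ ∃ (t u : Term F) (p : List Nat), p ≠ [] ∧ SubtermAt u p t ∧ Conv R t u

structure LMSystem (R : TRS F) : Prop where
  convergent : Convergent R
  almostLeftReduced : AlmostLeftReduced R
  rightReduced : RightReduced R
  nonCollapsing : NonSubtermCollapsing R
  forwardClosed : FCclosed R
  quasiDet : QuasiDet (RHSset R)

/-- the symbol (function symbol or variable) of a term at a position, if defined -/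
def labelAt {F : Type} : List Nat → Term F → Option (F ⊕ Nat)
  | [], t => some t.label
  | i :: p, Term.app _ ts => ts[i]?.bind (labelAt p)
  | _ :: _, Term.var _ => none

/-- outermost distinguishing position -/
def ODP (s t : Term F) (p : List Nat) : Prop :=
  (labelAt p s ≠ none ∨ labelAt p t ≠ none) ∧
  labelAt p s ≠ labelAt p t ∧
  ∀ q, q <+: p → q ≠ p → labelAt q s = labelAt q t

/-!
Every new equation of `RHS(R)` has the form `sσ ≈ uρσ` for rules `s → t`, `u → v` of `R`
with `σ` unifying `t` and `vρ`, so its sides are not variables and their roots are those of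
`s` and `u`. If those roots coincided, `(s, t)` and `(u, v)` would have the same root pair
(the roots of `t` and `v` agree since `tσ = vρσ`), so by quasi-determinism of `R` they are
the same rule. Then `σ` and `ρσ` agree on the variables of `t`, which by variable preservation
are those of `s`, whence `sσ = sρσ`, contradicting the side condition of the inference.
-/

namespace Term

theorem subst_app (σ : Nat → Term F) (f : F) (ts : List (Term F)) :
    (app f ts).subst σ = app f (ts.map (·.subst σ)) := by
  simp [subst]

theorem varsL_app (f : F) (ts : List (Term F)) :
    (app f ts).varsL = (ts.map varsL).flatten := by
  simp [varsL]

theorem subst_subst (ρ σ : Nat → Term F) :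
    ∀ t : Term F, (t.subst ρ).subst σ = t.subst (fun x => (ρ x).subst σ)
  | .var n => by simp [subst]
  | .app f ts => by
    simp only [subst_app, List.map_map]
    congr 1
    refine List.map_congr_left fun t ht => ?_
    exact subst_subst ρ σ t
termination_by t => sizeOf t
decreasing_by simp_wf; have := List.sizeOf_lt_of_mem ht; omega

theorem subst_eq_subst_iff {σ τ : Nat → Term F} :
    ∀ t : Term F, t.subst σ = t.subst τ ↔ ∀ x ∈ t.varsL, σ x = τ x
  | .var n => by simp [subst, varsL]
  | .app f ts => by
    simp only [subst_app, app.injEq, true_and, List.map_inj_left, varsL_app, List.mem_flatten,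
      List.mem_map]
    constructor
    · rintro h x ⟨_, ⟨u, hu, rfl⟩, hx⟩
      exact (subst_eq_subst_iff u).mp (h u hu) x hx
    · intro h u hu
      exact (subst_eq_subst_iff u).mpr fun x hx => h x ⟨_, ⟨u, hu, rfl⟩, hx⟩
termination_by t => sizeOf t
decreasing_by all_goals simp_wf; have := List.sizeOf_lt_of_mem hu; omega

theorem subst_eq_subst_of_varsL_subset {σ τ : Nat → Term F} {s t : Term F}
    (hst : ∀ x ∈ s.varsL, x ∈ t.varsL) (h : t.subst σ = t.subst τ) :
    s.subst σ = s.subst τ :=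
  (subst_eq_subst_iff s).mpr fun x hx => (subst_eq_subst_iff t).mp h x (hst x hx)

theorem root_subst {t : Term F} (σ : Nat → Term F) (h : ¬ t.IsVar) :
    (t.subst σ).root = t.root := by
  cases t with
  | var n => exact absurd trivial h
  | app f ts => rw [subst_app]; rfl

theorem not_isVar_subst {t : Term F} (σ : Nat → Term F) (h : ¬ t.IsVar) :
    ¬ (t.subst σ).IsVar := by
  cases t with
  | var n => exact absurd trivial h
  | app f ts => rw [subst_app]; exact id

end Term

theorem quasiDet_iff (E : TRS F) :
    QuasiDet E ↔ ((∀ e ∈ E, ¬ e.1.IsVar ∧ ¬ e.2.IsVar) ∧ (∀ e ∈ E, e.1.root ≠ e.2.root)) ∧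
      ¬ HasRootPairRepetition E := by
  simp only [QuasiDet, HasRootPairRepetition, not_exists, not_and, and_assoc]

theorem RHSset.not_isVar {R : TRS F} (hR : ∀ e ∈ R, ¬ e.1.IsVar ∧ ¬ e.2.IsVar) :
    ∀ e ∈ RHSset R, ¬ e.1.IsVar ∧ ¬ e.2.IsVar := by
  rintro e (he | ⟨s, t, u₀, v₀, ρ, σ, hst, huv, -, -, -, rfl⟩)
  · exact hR e he
  · exact ⟨Term.not_isVar_subst σ (hR _ hst).1,
      Term.not_isVar_subst σ (Term.not_isVar_subst ρ (hR _ huv).1)⟩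

theorem RHSset.root_ne {R : TRS F} (hvp : VarPreserving R) (hqd : QuasiDet R) :
    ∀ e ∈ RHSset R, e.1.root ≠ e.2.root := by
  rintro e (he | ⟨s, t, u₀, v₀, ρ, σ, hst, huv, -, ⟨hσ, -⟩, hne, rfl⟩)
  · exact hqd.2.1 e he
  obtain ⟨hs, ht⟩ := hqd.1 _ hst
  obtain ⟨hu, hv⟩ := hqd.1 _ huv
  have root_subst_subst {w : Term F} (hw : ¬ w.IsVar) : ((w.subst ρ).subst σ).root = w.root := by
    rw [Term.root_subst σ (Term.not_isVar_subst ρ hw), Term.root_subst ρ hw]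
  dsimp only
  rw [Term.root_subst σ hs, root_subst_subst hu]
  intro hsu
  have htv : t.root = v₀.root := by
    simpa only [Term.root_subst σ ht, root_subst_subst hv] using congrArg Term.root hσ
  obtain ⟨rfl, rfl⟩ : s = u₀ ∧ t = v₀ := by
    by_contra hne'
    exact hqd.2.2 _ hst _ huv (fun h => hne' (Prod.mk.inj h)) (Or.inl ⟨hsu, htv⟩)
  apply hne
  rw [Unifies, Term.subst_subst] at hσ
  rw [Term.subst_subst]
  exact Term.subst_eq_subst_of_varsL_subset (fun x => (hvp _ hst x).mp) hσ

theorem rhs_quasidet_iff_general {F : Type} (R : TRS F)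
    (hvp : VarPreserving R) (hqd : QuasiDet R) :
    ¬ QuasiDet (RHSset R) ↔ HasRootPairRepetition (RHSset R) := by
  rw [quasiDet_iff, and_iff_right ⟨RHSset.not_isVar hqd.1, RHSset.root_ne hvp hqd⟩, not_not]

/-- for a variable-preserving, convergent, quasi-deterministic `R`,
`RHS(R)` fails to be quasi-deterministic iff it has a root pair repetition. -/
theorem rhs_quasidet_iff {F : Type} (R : TRS F)
    (hvp : VarPreserving R) (hconv : Convergent R) (hqd : QuasiDet R) :
    ¬ QuasiDet (RHSset R) ↔ HasRootPairRepetition (RHSset R) :=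
  rhs_quasidet_iff_general R hvp hqd
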